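/- Let 0 ≤ λ_i ≤ 1 with λ_1+λ_2 < 1, λ_2+λ_3 < 1 and λ_3+λ_4 < 1, and let the 4-queue path-graph system evolve under the policy π̃_1 defined by: if ζ(t) = (1,1,1,0) then S(t) = (1,0,1,0); else if Q_2(t) > 0 then S(t) = (0,1,0,1); else if Q_3(t) > 0 then S(t) = (1,0,1,0); else S(t) = (1,0,0,1). Then limsup_{T→∞} (1/T) ∑_{t=0}^{T−1} ∑_{i=1}^{4} E[Q_i(t)] < ∞, i.e., π̃_1 is throughput-optimal. -/

import Mathlib

/-!
Queues are indexed from `0` here: the paper's queue `k` is `Q · (k - 1)`.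

Under π̃_1 exactly one queue of each of the pairs {1,2} and {2,3} is served, and it is a
nonempty one whenever the pair is nonempty, so `Q₁ + Q₂` and `Q₂ + Q₃` are single-server
queues with arrival rate below one. Queue 4 is left unserved only when it is empty or when
queue 3 is served, so `Q₃ + Q₄` too drops by one in every slot in which `Q₄ > 0`. Going back
to the last time `s` at which the pair was empty (for `Q₃ + Q₄`: at which `Q₄` was empty),
the pair now holds at most its content at `s`, plus the arrivals since `s`, minus the elapsed
time, plus one. These arrivals are independent of the state at `s`, so for `c = 1 + δ` with
`δ` small the contribution of `s` to `E[c ^ (Qᵢ + Qⱼ)]` decays geometrically in the elapsed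
time. This bounds the exponential moments, hence the means, of all queues uniformly in time.
-/

open MeasureTheory ProbabilityTheory Filter Finset
open scoped ENNReal

/-- The policy π̃_1 for the 4-queue path graph: if the occupancy vector is `(1,1,1,0)`
serve `(1,0,1,0)`; else serve `(0,1,0,1)` if queue 2 is nonempty; else serve `(1,0,1,0)`
if queue 3 is nonempty; else serve `(1,0,0,1)`. -/
def piTilde1 (q : Fin 4 → ℕ) : Fin 4 → ℕ :=
  if 0 < q 0 ∧ 0 < q 1 ∧ 0 < q 2 ∧ q 3 = 0 then ![1, 0, 1, 0]
  else if 0 < q 1 then ![0, 1, 0, 1]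
  else if 0 < q 2 then ![1, 0, 1, 0]
  else ![1, 0, 0, 1]

theorem exists_regeneration_bound {v b : ℕ → ℕ} {P : ℕ → Prop} (h0 : P 0)
    (hle : ∀ t, v (t + 1) ≤ v t + b t) (hlt : ∀ t, ¬P t → v (t + 1) + 1 ≤ v t + b t) (T : ℕ) :
    ∃ s ≤ T, P s ∧ v T + (T - s) ≤ v s + ∑ t ∈ Ico s T, b t + 1 := by
  induction T with
  | zero => exact ⟨0, le_rfl, h0, by simp⟩
  | succ T ih =>
    by_cases hT : P T
    · refine ⟨T, by omega, hT, ?_⟩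
      rw [Nat.Ico_succ_singleton, sum_singleton]
      have := hle T
      omega
    · obtain ⟨s, hsT, hs, h⟩ := ih
      refine ⟨s, by omega, hs, ?_⟩
      rw [sum_Ico_succ_top hsT]
      have := hlt T hT
      omega

theorem piTilde1_serves_zero_one {q : Fin 4 → ℕ} (hq : ¬q 0 + q 1 = 0) :
    q 0 - piTilde1 q 0 + (q 1 - piTilde1 q 1) + 1 = q 0 + q 1 := by
  unfold piTilde1
  split_ifs <;> simp only [Matrix.cons_val] <;> omega

theorem piTilde1_serves_one_two {q : Fin 4 → ℕ} (hq : ¬q 1 + q 2 = 0) :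
    q 1 - piTilde1 q 1 + (q 2 - piTilde1 q 2) + 1 = q 1 + q 2 := by
  unfold piTilde1
  split_ifs <;> simp only [Matrix.cons_val] <;> omega

theorem piTilde1_serves_two_three {q : Fin 4 → ℕ} (hq : ¬q 3 = 0) :
    q 2 - piTilde1 q 2 + (q 3 - piTilde1 q 3) + 1 = q 2 + q 3 := by
  unfold piTilde1
  split_ifs <;> simp only [Matrix.cons_val] <;> omega

theorem natCast_le_inv_mul_one_add_pow {d : ℝ≥0∞} (hd0 : d ≠ 0) (hd : d ≠ ⊤) (n : ℕ) :
    (n : ℝ≥0∞) ≤ d⁻¹ * (1 + d) ^ n := by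
  have hbernoulli : (n : ℝ≥0∞) * d ≤ (1 + d) ^ n := by
    induction n with
    | zero => simp
    | succ n ih =>
      calc ((n + 1 : ℕ) : ℝ≥0∞) * d = n * d + d * 1 := by push_cast; ring
        _ ≤ (1 + d) ^ n + d * (1 + d) ^ n := by
          gcongr
          exact one_le_pow₀ le_self_add
        _ = (1 + d) ^ (n + 1) := by ring
  calc (n : ℝ≥0∞) = d⁻¹ * (n * d) := by
        rw [mul_comm (n : ℝ≥0∞), ← mul_assoc, ENNReal.inv_mul_cancel hd0 hd, one_mul]
    _ ≤ d⁻¹ * (1 + d) ^ n := by gcongr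

theorem limsup_sum_range_div_lt_top {f : ℕ → ℝ≥0∞} {K : ℝ≥0∞} (hK : K ≠ ⊤)
    (hf : ∀ t, f t ≤ K) : limsup (fun T : ℕ => (∑ t ∈ range T, f t) / T) atTop < ⊤ := by
  refine lt_of_le_of_lt (limsup_le_of_le (by isBoundedDefault) (Eventually.of_forall
    fun T => ENNReal.div_le_of_le_mul ?_)) hK.lt_top
  calc ∑ t ∈ range T, f t ≤ ∑ _t ∈ range T, K := sum_le_sum fun t _ => hf t
    _ = K * T := by rw [sum_const, card_range, nsmul_eq_mul, mul_comm]

theorem exists_one_add_mul_mul_one_add_mul_le {ρ : ℝ} (hρ0 : 0 ≤ ρ) (hρ1 : ρ < 1) :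
    ∃ d : ℝ≥0∞, d ≠ 0 ∧ d ≠ ⊤ ∧ ∃ r < 1, ∀ x y : ℝ, 0 ≤ x → 0 ≤ y → x + y ≤ ρ →
      (1 + d * ENNReal.ofReal x) * (1 + d * ENNReal.ofReal y) ≤ r * (1 + d) := by
  set δ : ℝ := (1 - ρ) / 2
  have hδ0 : 0 < δ := by simp only [δ]; linarith
  have hδ1 : δ ≤ 1 / 2 := by simp only [δ]; linarith
  have hofReal : ∀ x, 0 ≤ x →
      1 + ENNReal.ofReal δ * ENNReal.ofReal x = ENNReal.ofReal (1 + δ * x) := fun x hx => by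
    rw [← ENNReal.ofReal_mul hδ0.le, ← ENNReal.ofReal_one,
      ← ENNReal.ofReal_add zero_le_one (by positivity)]
  refine ⟨ENNReal.ofReal δ, by simpa using hδ0, ENNReal.ofReal_ne_top,
    ENNReal.ofReal ((1 + δ - δ ^ 2) / (1 + δ)), ?_, fun x y hx hy hxy => ?_⟩
  · rw [ENNReal.ofReal_lt_one, div_lt_one (by linarith)]
    nlinarith
  · have hc : 1 + ENNReal.ofReal δ = ENNReal.ofReal (1 + δ) := by
      rw [← ENNReal.ofReal_one, ← ENNReal.ofReal_add zero_le_one hδ0.le]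
    rw [hofReal x hx, hofReal y hy, ← ENNReal.ofReal_mul (by positivity), hc,
      ← ENNReal.ofReal_mul (div_nonneg (by nlinarith) (by linarith)),
      div_mul_cancel₀ _ (by linarith)]
    refine ENNReal.ofReal_le_ofReal ?_
    -- `(1 + δx)(1 + δy) ≤ 1 + δρ + δ² = 1 + δ - δ²`, using `xy ≤ 1` and `ρ = 1 - 2δ`
    have hρ : ρ = 1 - 2 * δ := by simp only [δ]; ring
    have hxy1 : x * y ≤ 1 := by nlinarith
    nlinarith [mul_le_mul_of_nonneg_left hxy hδ0.le, mul_le_mul_of_nonneg_left hxy1 (sq_nonneg δ)]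

section Moments

variable {Ω : Type*} [MeasurableSpace Ω] {μ : Measure Ω}

theorem lintegral_one_add_pow_eq [IsProbabilityMeasure μ] {X : Ω → ℕ} (hX : Measurable X)
    (h1 : ∀ ω, X ω ≤ 1) (d : ℝ≥0∞) :
    ∫⁻ ω, (1 + d) ^ X ω ∂μ = 1 + d * μ {ω | X ω = 1} := by
  have hpow : ∀ ω, (1 + d) ^ X ω = 1 + {ω | X ω = 1}.indicator (fun _ => d) ω := by
    intro ω
    rcases Nat.le_one_iff_eq_zero_or_eq_one.1 (h1 ω) with h | h <;> simp [h]
  have hs : MeasurableSet {ω | X ω = 1} := hX (measurableSet_singleton 1)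
  rw [lintegral_congr hpow, lintegral_add_left measurable_const, lintegral_const, measure_univ,
    lintegral_indicator_const hs, mul_one]

theorem lintegral_pow_sum_eq_prod {ι : Type*} {X : ι → Ω → ℕ} (hX : ∀ i, Measurable (X i))
    (hind : iIndepFun X μ) (c : ℝ≥0∞) (P : Finset ι) :
    ∫⁻ ω, c ^ ∑ i ∈ P, X i ω ∂μ = ∏ i ∈ P, ∫⁻ ω, c ^ X i ω ∂μ := by
  simp_rw [← prod_pow_eq_pow_sum]
  exact lintegral_prod_eq_prod_lintegral_of_indepFun P (fun i ω => c ^ X i ω)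
    (hind.comp (fun _ n => c ^ n) fun _ => measurable_of_countable _)
    fun i => measurable_const.pow (hX i)

theorem lintegral_pow_le_of_exists_le {c C : ℝ≥0∞} (hc : 1 ≤ c) (hc' : c ≠ ⊤) (r : ℝ≥0∞)
    {X : Ω → ℕ} {W : ℕ → Ω → ℕ} (hW : ∀ s, Measurable (W s)) {T : ℕ}
    (hXW : ∀ ω, ∃ s ≤ T, X ω + (T - s) ≤ W s ω)
    (hWC : ∀ s ≤ T, ∫⁻ ω, c ^ W s ω ∂μ ≤ C * (r * c) ^ (T - s)) :
    ∫⁻ ω, c ^ X ω ∂μ ≤ C * (1 - r)⁻¹ := by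
  have hcancel : ∀ k : ℕ, c⁻¹ ^ k * c ^ k = 1 := fun k => by
    rw [← mul_pow, ENNReal.inv_mul_cancel (by positivity) hc', one_pow]
  have hpoint : ∀ ω, c ^ X ω ≤ ∑ s ∈ range (T + 1), c⁻¹ ^ (T - s) * c ^ W s ω := by
    intro ω
    obtain ⟨s, hsT, hs⟩ := hXW ω
    calc c ^ X ω = c⁻¹ ^ (T - s) * c ^ (X ω + (T - s)) := by
          rw [pow_add, mul_comm (c ^ X ω), ← mul_assoc, hcancel, one_mul]
      _ ≤ c⁻¹ ^ (T - s) * c ^ W s ω := by gcongr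
      _ ≤ _ := single_le_sum (f := fun s => c⁻¹ ^ (T - s) * c ^ W s ω)
          (fun _ _ => zero_le) (mem_range.2 (Nat.lt_succ_of_le hsT))
  calc ∫⁻ ω, c ^ X ω ∂μ
      ≤ ∫⁻ ω, ∑ s ∈ range (T + 1), c⁻¹ ^ (T - s) * c ^ W s ω ∂μ := lintegral_mono hpoint
    _ = ∑ s ∈ range (T + 1), c⁻¹ ^ (T - s) * ∫⁻ ω, c ^ W s ω ∂μ := by
        rw [lintegral_finsetSum _ fun s _ => (measurable_const.pow (hW s)).const_mul _]
        simp_rw [lintegral_const_mul _ (measurable_const.pow (hW _))]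
    _ ≤ ∑ s ∈ range (T + 1), c⁻¹ ^ (T - s) * (C * (r * c) ^ (T - s)) := by
        gcongr with s hs
        exact hWC s (Nat.lt_succ_iff.1 (mem_range.1 hs))
    _ = C * ∑ s ∈ range (T + 1), r ^ (T + 1 - 1 - s) := by
        rw [mul_sum]
        refine sum_congr rfl fun s _ => ?_
        rw [mul_pow, Nat.add_sub_cancel, mul_left_comm, mul_left_comm _ (r ^ _), hcancel, mul_one]
    _ ≤ C * (1 - r)⁻¹ := by
        rw [sum_range_reflect (fun k => r ^ k), ← ENNReal.tsum_geometric]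
        gcongr
        exact ENNReal.sum_le_tsum _

theorem lintegral_natCast_le_inv_mul {d B : ℝ≥0∞} (hd0 : d ≠ 0) (hd : d ≠ ⊤) {X V : Ω → ℕ}
    (hXV : ∀ ω, X ω ≤ V ω) (hV : ∫⁻ ω, (1 + d) ^ V ω ∂μ ≤ B) :
    ∫⁻ ω, (X ω : ℝ≥0∞) ∂μ ≤ d⁻¹ * B :=
  calc ∫⁻ ω, (X ω : ℝ≥0∞) ∂μ ≤ ∫⁻ ω, d⁻¹ * (1 + d) ^ V ω ∂μ := lintegral_mono fun ω =>
        (natCast_le_inv_mul_one_add_pow hd0 hd _).trans (by gcongr; exacts [le_self_add, hXV ω])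
    _ = d⁻¹ * ∫⁻ ω, (1 + d) ^ V ω ∂μ := lintegral_const_mul' _ _ (ENNReal.inv_ne_top.2 hd0)
    _ ≤ d⁻¹ * B := by gcongr

end Moments

abbrev arrivalSigma {κ Ω : Type*} (A : κ → ℕ → Ω → ℕ) (S : Set ℕ) : MeasurableSpace Ω :=
  ⨆ p ∈ Prod.snd ⁻¹' S, MeasurableSpace.comap (A p.1 p.2) inferInstance

section Arrivals

variable {κ Ω : Type*} {A : κ → ℕ → Ω → ℕ}

theorem arrivalSigma_le [MeasurableSpace Ω] (hA : ∀ i t, Measurable (A i t)) (S : Set ℕ) :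
    arrivalSigma A S ≤ ‹MeasurableSpace Ω› :=
  iSup₂_le fun p _ => (hA p.1 p.2).comap_le

theorem arrivalSigma_mono {S S' : Set ℕ} (h : S ⊆ S') : arrivalSigma A S ≤ arrivalSigma A S' :=
  biSup_mono fun _ hp => h hp

theorem measurable_arrivalSigma {S : Set ℕ} {t : ℕ} (ht : t ∈ S) (i : κ) :
    Measurable[arrivalSigma A S] (A i t) :=
  Measurable.of_comap_le (le_iSup₂ (f := fun p (_ : p ∈ Prod.snd ⁻¹' S) =>
    MeasurableSpace.comap (A p.1 p.2) inferInstance) (i, t) ht)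

variable [MeasurableSpace Ω] {μ : Measure Ω}

theorem indep_arrivalSigma (hA : ∀ i t, Measurable (A i t))
    (hind : iIndepFun (fun p : κ × ℕ => A p.1 p.2) μ) {S S' : Set ℕ} (h : Disjoint S S') :
    Indep (arrivalSigma A S) (arrivalSigma A S') μ :=
  indep_iSup_of_disjoint (m := fun p : κ × ℕ => MeasurableSpace.comap (A p.1 p.2) inferInstance)
    (fun p => (hA p.1 p.2).comap_le) ((iIndepFun_iff_iIndep _ _ _).1 hind) (h.preimage _)

theorem lintegral_pow_sum_Ico_le (hA : ∀ i t, Measurable (A i t))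
    (hind : iIndepFun (fun p : κ × ℕ => A p.1 p.2) μ) {i j : κ} (hij : i ≠ j) {c M : ℝ≥0∞}
    (hM : ∀ t, (∫⁻ ω, c ^ A i t ω ∂μ) * ∫⁻ ω, c ^ A j t ω ∂μ ≤ M) (s T : ℕ) :
    ∫⁻ ω, c ^ ∑ t ∈ Ico s T, (A i t ω + A j t ω) ∂μ ≤ M ^ (T - s) := by
  classical
  have hsum : ∀ ω, ∑ t ∈ Ico s T, (A i t ω + A j t ω) =
      ∑ p ∈ {i, j} ×ˢ Ico s T, A p.1 p.2 ω := fun ω => by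
    rw [sum_product_right]
    simp only [sum_pair hij]
  simp_rw [hsum]
  refine (lintegral_pow_sum_eq_prod (X := fun p : κ × ℕ => A p.1 p.2) (fun p => hA p.1 p.2)
    hind c _).trans_le ?_
  rw [prod_product_right, ← Nat.card_Ico]
  exact prod_le_pow_card _ _ _ fun t _ => by rw [prod_pair hij]; exact hM t

theorem lintegral_pow_add_sum_Ico_le (hA : ∀ i t, Measurable (A i t))
    (hind : iIndepFun (fun p : κ × ℕ => A p.1 p.2) μ) {i j : κ} (hij : i ≠ j) {c M : ℝ≥0∞}
    (hM : ∀ t, (∫⁻ ω, c ^ A i t ω ∂μ) * ∫⁻ ω, c ^ A j t ω ∂μ ≤ M) {s : ℕ} {Y : Ω → ℕ}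
    (hY : Measurable[arrivalSigma A (Set.Iio s)] Y) (T : ℕ) :
    ∫⁻ ω, c ^ (Y ω + ∑ t ∈ Ico s T, (A i t ω + A j t ω)) ∂μ ≤
      (∫⁻ ω, c ^ Y ω ∂μ) * M ^ (T - s) := by
  have hfuture : Measurable[arrivalSigma A (Set.Ici s)]
      (fun ω => ∑ t ∈ Ico s T, (A i t ω + A j t ω)) :=
    Finset.measurable_sum _ fun t ht =>
      have hst : t ∈ Set.Ici s := (mem_Ico.1 ht).1
      (measurable_arrivalSigma hst i).add (measurable_arrivalSigma hst j)
  simp_rw [pow_add]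
  rw [lintegral_mul_eq_lintegral_mul_lintegral_of_independent_measurableSpace
    (arrivalSigma_le hA _) (arrivalSigma_le hA _)
    (indep_arrivalSigma hA hind (Set.Iio_disjoint_Ici le_rfl))
    (measurable_const.pow hY) (measurable_const.pow hfuture)]
  gcongr
  exact lintegral_pow_sum_Ico_le hA hind hij hM s T

theorem exists_lintegral_pow_mul_le [IsProbabilityMeasure μ] {lam : κ → ℝ}
    (hlam : ∀ i, 0 ≤ lam i) {ρ : ℝ} (hρ0 : 0 ≤ ρ) (hρ1 : ρ < 1) (hA : ∀ i t, Measurable (A i t))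
    (hA01 : ∀ i t ω, A i t ω ≤ 1) (hArate : ∀ i t, μ {ω | A i t ω = 1} = ENNReal.ofReal (lam i)) :
    ∃ d : ℝ≥0∞, d ≠ 0 ∧ d ≠ ⊤ ∧ ∃ r < 1, ∀ i j, lam i + lam j ≤ ρ → ∀ t,
      (∫⁻ ω, (1 + d) ^ A i t ω ∂μ) * ∫⁻ ω, (1 + d) ^ A j t ω ∂μ ≤ r * (1 + d) := by
  obtain ⟨d, hd0, hd, r, hr, hmgf⟩ := exists_one_add_mul_mul_one_add_mul_le hρ0 hρ1
  refine ⟨d, hd0, hd, r, hr, fun i j h t => ?_⟩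
  rw [lintegral_one_add_pow_eq (hA i t) (hA01 i t), lintegral_one_add_pow_eq (hA j t) (hA01 j t),
    hArate, hArate]
  exact hmgf _ _ (hlam i) (hlam j) h

end Arrivals

structure IsQueueProcess {κ Ω : Type*} (π : (κ → ℕ) → κ → ℕ) (A : κ → ℕ → Ω → ℕ)
    (Q : ℕ → κ → Ω → ℕ) : Prop where
  zero : ∀ i ω, Q 0 i ω = 0
  succ : ∀ t i ω, Q (t + 1) i ω = Q t i ω - π (fun j => Q t j ω) i + A i t ω

namespace IsQueueProcess

variable {κ Ω : Type*} {π : (κ → ℕ) → κ → ℕ} {A : κ → ℕ → Ω → ℕ} {Q : ℕ → κ → Ω → ℕ}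

theorem exists_regeneration (hQ : IsQueueProcess π A Q) {i j : κ}
    {p : (κ → ℕ) → Prop} (hp : p 0)
    (hπ : ∀ q, ¬p q → q i - π q i + (q j - π q j) + 1 = q i + q j) (ω : Ω) (T : ℕ) :
    ∃ s ≤ T, p (fun k => Q s k ω) ∧ Q T i ω + Q T j ω + (T - s) ≤
      Q s i ω + Q s j ω + ∑ t ∈ Ico s T, (A i t ω + A j t ω) + 1 := by
  have hQ0 : (fun k => Q 0 k ω) = 0 := funext fun k => hQ.zero k ω
  refine exists_regeneration_bound (v := fun t => Q t i ω + Q t j ω) (by rwa [hQ0])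
    (fun t => ?_) (fun t ht => ?_) T
  · simp only [hQ.succ]
    omega
  · have := hπ _ ht
    simp only [hQ.succ]
    omega

theorem measurable_arrivalSigma [Finite κ] (hQ : IsQueueProcess π A Q)
    (t : ℕ) (i : κ) : Measurable[arrivalSigma A (Set.Iio t)] (Q t i) := by
  induction t generalizing i with
  | zero =>
    rw [show Q 0 i = fun _ => 0 from funext (hQ.zero i)]
    exact measurable_const
  | succ t ih =>
    have hmono := arrivalSigma_mono (A := A) (Set.Iio_subset_Iio (Nat.le_succ t))
    have hstate : Measurable[arrivalSigma A (Set.Iio (t + 1))]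
        (fun ω => ((fun j => Q t j ω), A i t ω)) :=
      (@measurable_pi_lambda _ _ _ (arrivalSigma A (Set.Iio (t + 1))) _ _
        fun j => (ih j).mono hmono le_rfl).prodMk
        (_root_.measurable_arrivalSigma (Set.mem_Iio.2 t.lt_succ_self) i)
    rw [show Q (t + 1) i = (fun x : (κ → ℕ) × ℕ => x.1 i - π x.1 i + x.2) ∘
      (fun ω => ((fun j => Q t j ω), A i t ω)) from funext (hQ.succ t i)]
    exact Measurable.comp (measurable_of_countable _) hstate

variable [MeasurableSpace Ω] {μ : Measure Ω}

/-- `p` singles out the states at which the pair `(i, j)` regenerates, and `Y s` bounds the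
content of the pair at a regeneration time `s` in terms of the arrivals before `s`. -/
theorem lintegral_pow_add_le (hQ : IsQueueProcess π A Q)
    (hA : ∀ i t, Measurable (A i t)) (hind : iIndepFun (fun p : κ × ℕ => A p.1 p.2) μ)
    {i j : κ} (hij : i ≠ j) {p : (κ → ℕ) → Prop} (hp : p 0)
    (hπ : ∀ q, ¬p q → q i - π q i + (q j - π q j) + 1 = q i + q j)
    {Y : ℕ → Ω → ℕ} (hY : ∀ s, Measurable[arrivalSigma A (Set.Iio s)] (Y s))
    (hQY : ∀ s ω, p (fun k => Q s k ω) → Q s i ω + Q s j ω ≤ Y s ω)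
    {c r C : ℝ≥0∞} (hc : 1 ≤ c) (hc' : c ≠ ⊤)
    (hM : ∀ t, (∫⁻ ω, c ^ A i t ω ∂μ) * ∫⁻ ω, c ^ A j t ω ∂μ ≤ r * c)
    (hC : ∀ s, ∫⁻ ω, c ^ Y s ω ∂μ ≤ C) (T : ℕ) :
    ∫⁻ ω, c ^ (Q T i ω + Q T j ω) ∂μ ≤ c * C * (1 - r)⁻¹ := by
  set W : ℕ → Ω → ℕ := fun s ω => Y s ω + ∑ t ∈ Ico s T, (A i t ω + A j t ω) + 1
  have hW : ∀ s, Measurable (W s) := fun s =>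
    (((hY s).mono (arrivalSigma_le hA _) le_rfl).add
      (Finset.measurable_sum _ fun t _ => (hA i t).add (hA j t))).add_const 1
  refine lintegral_pow_le_of_exists_le (T := T) hc hc' r hW (fun ω => ?_) (fun s _ => ?_)
  · obtain ⟨s, hsT, hps, hs⟩ := hQ.exists_regeneration hp hπ ω T
    exact ⟨s, hsT, by have := hQY s ω hps; simp only [W]; omega⟩
  · calc ∫⁻ ω, c ^ W s ω ∂μ
        = c * ∫⁻ ω, c ^ (Y s ω + ∑ t ∈ Ico s T, (A i t ω + A j t ω)) ∂μ := by
          simp_rw [W, pow_succ]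
          rw [lintegral_mul_const' _ _ hc', mul_comm]
      _ ≤ c * ((∫⁻ ω, c ^ Y s ω ∂μ) * (r * c) ^ (T - s)) := by
          gcongr
          exact lintegral_pow_add_sum_Ico_le hA hind hij hM (hY s) T
      _ ≤ c * C * (r * c) ^ (T - s) := by
          rw [← mul_assoc]
          gcongr
          exact hC s

theorem lintegral_pow_add_le_of_serves [IsProbabilityMeasure μ] (hQ : IsQueueProcess π A Q)
    (hA : ∀ i t, Measurable (A i t)) (hind : iIndepFun (fun p : κ × ℕ => A p.1 p.2) μ)
    {i j : κ} (hij : i ≠ j) (hπ : ∀ q, ¬q i + q j = 0 → q i - π q i + (q j - π q j) + 1 = q i + q j)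
    {c r : ℝ≥0∞} (hc : 1 ≤ c) (hc' : c ≠ ⊤)
    (hM : ∀ t, (∫⁻ ω, c ^ A i t ω ∂μ) * ∫⁻ ω, c ^ A j t ω ∂μ ≤ r * c) (T : ℕ) :
    ∫⁻ ω, c ^ (Q T i ω + Q T j ω) ∂μ ≤ c * (1 - r)⁻¹ := by
  simpa using hQ.lintegral_pow_add_le hA hind hij (p := fun q => q i + q j = 0) rfl hπ
    (Y := 0) (fun _ => measurable_const) (fun _ _ h => h.le) hc hc' hM (C := 1) (by simp) T

end IsQueueProcess

/-- Throughput optimality of π̃_1 for the 4-queue path graph. -/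
theorem piTilde1_throughput_optimal
    {Ω : Type*} [MeasurableSpace Ω] (μ : Measure Ω) [IsProbabilityMeasure μ]
    (lam : Fin 4 → ℝ) (hlam : ∀ i, 0 ≤ lam i ∧ lam i ≤ 1)
    (hcap1 : lam 0 + lam 1 < 1) (hcap2 : lam 1 + lam 2 < 1) (hcap3 : lam 2 + lam 3 < 1)
    (A : Fin 4 → ℕ → Ω → ℕ)
    (hAmeas : ∀ i t, Measurable (A i t))
    (hA01 : ∀ i t ω, A i t ω ≤ 1)
    (hArate : ∀ i t, μ {ω | A i t ω = 1} = ENNReal.ofReal (lam i))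
    (hAindep : iIndepFun
      (fun p : Fin 4 × ℕ => fun ω => A p.1 p.2 ω) μ)
    (Q : ℕ → Fin 4 → Ω → ℕ)
    (hQ0 : ∀ i ω, Q 0 i ω = 0)
    (hQevol : ∀ t i ω,
      Q (t + 1) i ω = Q t i ω - piTilde1 (fun j => Q t j ω) i + A i t ω) :
    limsup (fun T : ℕ =>
        (∑ t ∈ Finset.range T, ∑ i, ∫⁻ ω, (Q t i ω : ℝ≥0∞) ∂μ) / (T : ℝ≥0∞))
      atTop < ⊤ := by
  set ρ := max (lam 0 + lam 1) (max (lam 1 + lam 2) (lam 2 + lam 3))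
  obtain ⟨d, hd0, hd, r, hr, hM⟩ := exists_lintegral_pow_mul_le (fun i => (hlam i).1)
    (le_max_of_le_left (add_nonneg (hlam 0).1 (hlam 1).1)) (max_lt hcap1 (max_lt hcap2 hcap3))
    hAmeas hA01 hArate
  have hc : 1 ≤ 1 + d := le_self_add
  have hc' : 1 + d ≠ ⊤ := by simpa using hd
  have hQ : IsQueueProcess piTilde1 A Q := ⟨hQ0, hQevol⟩
  have h01 := hQ.lintegral_pow_add_le_of_serves hAmeas hAindep (by decide : (0 : Fin 4) ≠ 1)
    (fun _ => piTilde1_serves_zero_one) hc hc' (hM 0 1 (le_max_left _ _))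
  have h12 := hQ.lintegral_pow_add_le_of_serves hAmeas hAindep (by decide : (1 : Fin 4) ≠ 2)
    (fun _ => piTilde1_serves_one_two) hc hc' (hM 1 2 (le_max_of_le_right (le_max_left _ _)))
  have h23 := hQ.lintegral_pow_add_le hAmeas hAindep (by decide : (2 : Fin 4) ≠ 3)
    (p := fun q => q 3 = 0) rfl (fun _ => piTilde1_serves_two_three)
    (hQ.measurable_arrivalSigma · 2) (fun _ _ h => by simp [h]) hc hc'
    (hM 2 3 (le_max_of_le_right (le_max_right _ _)))
    (fun s => (lintegral_mono fun ω => pow_le_pow_right₀ hc (Nat.le_add_left _ _)).trans (h12 s))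
  have hr' : (1 - r)⁻¹ ≠ ⊤ := ENNReal.inv_ne_top.2 (tsub_pos_of_lt hr).ne'
  have hd' : d⁻¹ ≠ ⊤ := ENNReal.inv_ne_top.2 hd0
  set C := (1 + d) * (1 - r)⁻¹
  refine limsup_sum_range_div_lt_top (K := d⁻¹ * (C + C + C + (1 + d) * C * (1 - r)⁻¹))
    (by finiteness) fun T => ?_
  rw [Fin.sum_univ_four, mul_add, mul_add, mul_add]
  gcongr
  · exact lintegral_natCast_le_inv_mul hd0 hd (fun ω => Nat.le_add_right _ (Q T 1 ω)) (h01 T)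
  · exact lintegral_natCast_le_inv_mul hd0 hd (fun ω => Nat.le_add_left _ (Q T 0 ω)) (h01 T)
  · exact lintegral_natCast_le_inv_mul hd0 hd (fun ω => Nat.le_add_left _ (Q T 1 ω)) (h12 T)
  · exact lintegral_natCast_le_inv_mul hd0 hd (fun ω => Nat.le_add_left _ (Q T 2 ω)) (h23 T)
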